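/- arXiv:1512.02207 — 4 statements merged into one kernel-verified Lean document; each statement's English description precedes it below -/
import Mathlib

section
/- Every graph with maximum degree at most 3 is partitionable, i.e., its vertex set can be partitioned into a set inducing a disjoint union of cliques (P3-free graph) and a set inducing a triangle-free graph. -/
open SimpleGraph

variable {V : Type*}

/-- The set `B` induces a `P₃`-free graph (disjoint union of cliques). -/
def P3FreeOn (G : SimpleGraph V) (B : Set V) : Prop :=
  ∀ a ∈ B, ∀ b ∈ B, ∀ c ∈ B, G.Adj a b → G.Adj b c → a ≠ c → G.Adj a c

/-- The set `R` induces a triangle-free graph. -/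
def K3FreeOn (G : SimpleGraph V) (R : Set V) : Prop :=
  ∀ a ∈ R, ∀ b ∈ R, ∀ c ∈ R, ¬(G.Adj a b ∧ G.Adj b c ∧ G.Adj a c)

/-- A graph is partitionable if its vertices split into a `P₃`-free part and a
triangle-free part. -/
def Partitionable (G : SimpleGraph V) : Prop :=
  ∃ B : Set V, P3FreeOn G B ∧ K3FreeOn G Bᶜ


section Aux
variable [Fintype V] [DecidableEq V] (G : SimpleGraph V) [DecidableRel G.Adj]

/-- number of neighbors of `x` inside `S`. -/
def dIn (S : Finset V) (x : V) : ℕ := ((G.neighborFinset x).filter (· ∈ S)).card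

def gval (S : Finset V) : ℕ := ∑ v ∈ S, dIn G S v

def fval (S : Finset V) : ℕ := gval G S + gval G Sᶜ

lemma dIn_insert_self (S : Finset V) (x : V) : dIn G (insert x S) x = dIn G S x := by
  unfold dIn
  congr 1
  apply Finset.filter_congr
  intro u hu
  simp only [Finset.mem_insert]
  constructor
  · rintro (rfl | h)
    · exact absurd hu (by simp)
    · exact h
  · exact Or.inr

lemma gval_insert (S : Finset V) (x : V) (hx : x ∉ S) :
    gval G (insert x S) = gval G S + 2 * dIn G S x := by
  unfold gval
  rw [Finset.sum_insert hx, dIn_insert_self G S x]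
  have hstep : ∀ v ∈ S, dIn G (insert x S) v = dIn G S v + (if G.Adj x v then 1 else 0) := by
    intro v hv
    unfold dIn
    by_cases h : G.Adj x v
    · have hxN : x ∈ G.neighborFinset v := by
        rw [G.mem_neighborFinset]; exact h.symm
      have heq : (G.neighborFinset v).filter (· ∈ insert x S) =
          insert x ((G.neighborFinset v).filter (· ∈ S)) := by
        ext u
        simp only [Finset.mem_filter, Finset.mem_insert]
        constructor
        · rintro ⟨hu, rfl | hu2⟩
          · exact Or.inl rfl
          · exact Or.inr ⟨hu, hu2⟩
        · rintro (rfl | ⟨hu, hu2⟩)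
          · exact ⟨hxN, Or.inl rfl⟩
          · exact ⟨hu, Or.inr hu2⟩
      rw [heq, Finset.card_insert_of_notMem (by simp [hx]), if_pos h]
    · have hxN : x ∉ G.neighborFinset v := by
        rw [G.mem_neighborFinset]; exact fun h' => h h'.symm
      have heq : (G.neighborFinset v).filter (· ∈ insert x S) =
          (G.neighborFinset v).filter (· ∈ S) := by
        apply Finset.filter_congr
        intro u hu
        simp only [Finset.mem_insert]
        constructor
        · rintro (rfl | h2)
          · exact absurd hu hxN
          · exact h2
        · exact Or.inr
      rw [heq, if_neg h, Nat.add_zero]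
  rw [Finset.sum_congr rfl hstep, Finset.sum_add_distrib]
  have hsum : ∑ v ∈ S, (if G.Adj x v then 1 else 0) = dIn G S x := by
    rw [← Finset.card_filter]
    unfold dIn
    congr 1
    ext u
    simp only [Finset.mem_filter, SimpleGraph.mem_neighborFinset]
    tauto
  rw [hsum]
  omega

lemma fval_compl (S : Finset V) : fval G Sᶜ = fval G S := by
  unfold fval
  rw [compl_compl]
  omega

lemma dIn_add_compl (S : Finset V) (x : V) : dIn G S x + dIn G Sᶜ x = G.degree x := by
  unfold dIn
  rw [← G.card_neighborFinset_eq_degree]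
  have : ∀ u : V, (u ∈ Sᶜ) = ¬(u ∈ S) := by intro u; simp
  simp only [this]
  exact Finset.card_filter_add_card_filter_not _

lemma key (hdeg : ∀ v, G.degree v ≤ 3) (B : Finset V)
    (hmin : ∀ C : Finset V, fval G B ≤ fval G C) (x : V) (hx : x ∈ B) :
    dIn G B x ≤ 1 := by
  set B' := B.erase x with hB'
  have hxB' : x ∉ B' := Finset.notMem_erase x B
  have hBi : B = insert x B' := (Finset.insert_erase hx).symm
  have h1 : gval G B = gval G B' + 2 * dIn G B' x := by
    rw [hBi]; exact gval_insert G B' x hxB'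
  have hc : B'ᶜ = insert x Bᶜ := by
    ext u
    simp only [Finset.mem_compl, hB', Finset.mem_erase, Finset.mem_insert]
    tauto
  have hxc : x ∉ Bᶜ := by simp [hx]
  have h2 : gval G B'ᶜ = gval G Bᶜ + 2 * dIn G Bᶜ x := by
    rw [hc]; exact gval_insert G Bᶜ x hxc
  have hm := hmin B'
  have hdx : dIn G B x = dIn G B' x := by
    conv_lhs => rw [hBi]
    exact dIn_insert_self G B' x
  have hs := dIn_add_compl G B x
  have hd := hdeg x
  unfold fval at hm
  omega

end Aux

theorem stmt1 [Fintype V] (G : SimpleGraph V) [DecidableRel G.Adj]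
    (hdeg : ∀ v, G.degree v ≤ 3) : Partitionable G := by
  classical
  obtain ⟨B, -, hmin⟩ := Finset.exists_min_image (Finset.univ : Finset (Finset V))
    (fval G) ⟨∅, Finset.mem_univ _⟩
  have hmin' : ∀ C : Finset V, fval G B ≤ fval G C := fun C => hmin C (Finset.mem_univ C)
  have hB : ∀ x ∈ B, dIn G B x ≤ 1 := fun x hx => key G hdeg B hmin' x hx
  have hminC : ∀ C : Finset V, fval G Bᶜ ≤ fval G C := by
    intro C; rw [fval_compl]; exact hmin' C
  have hR : ∀ x ∈ Bᶜ, dIn G Bᶜ x ≤ 1 := fun x hx => key G hdeg Bᶜ hminC x hx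
  have keycard : ∀ (S : Finset V) (a b c : V), a ∈ S → c ∈ S → a ≠ c →
      G.Adj b a → G.Adj b c → 2 ≤ dIn G S b := by
    intro S a b c haS hcS hac hba hbc
    have hsub : ({a, c} : Finset V) ⊆ (G.neighborFinset b).filter (· ∈ S) := by
      intro u hu
      simp only [Finset.mem_insert, Finset.mem_singleton] at hu
      rcases hu with rfl | rfl
      · exact Finset.mem_filter.mpr ⟨(SimpleGraph.mem_neighborFinset G b u).mpr hba, haS⟩
      · exact Finset.mem_filter.mpr ⟨(SimpleGraph.mem_neighborFinset G b u).mpr hbc, hcS⟩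
    have := Finset.card_le_card hsub
    rwa [Finset.card_pair hac] at this
  refine ⟨↑B, ?_, ?_⟩
  · intro a ha b hb c hc hab hbc hac
    exfalso
    have hb' : b ∈ B := hb
    have h2 := keycard B a b c ha hc hac hab.symm hbc
    have h1 := hB b hb'
    omega
  · intro a ha b hb c hc ⟨hab, hbc, hac⟩
    have ha' : a ∈ Bᶜ := Finset.mem_compl.mpr ha
    have hb' : b ∈ Bᶜ := Finset.mem_compl.mpr hb
    have hc' : c ∈ Bᶜ := Finset.mem_compl.mpr hc
    have h2 := keycard Bᶜ a b c ha' hc' (G.ne_of_adj hac) hab.symm hbc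
    have h1 := hR b hb'
    omega
end

section
/- Every graph with maximum degree at most 3 is (1,1)-colorable: its vertices can be partitioned into two sets each inducing a subgraph of maximum degree at most 1. -/
open SimpleGraph Finset

section Aux

variable {V : Type*} [Fintype V] [DecidableEq V] (G : SimpleGraph V) [DecidableRel G.Adj]

private def fpair (A : Finset V) (w u : V) : ℕ :=
  if G.Adj w u ∧ (u ∈ A ↔ w ∈ A) then 1 else 0

private def cost (A : Finset V) : ℕ := ∑ w, ∑ u, fpair G A w u

private lemma fsymm (A : Finset V) (w u : V) : fpair G A w u = fpair G A u w := by
  unfold fpair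
  by_cases h : G.Adj w u ∧ (u ∈ A ↔ w ∈ A)
  · rw [if_pos h, if_pos ⟨h.1.symm, h.2.symm⟩]
  · rw [if_neg h, if_neg (fun h' => h ⟨h'.1.symm, h'.2.symm⟩)]

private lemma fself (A : Finset V) (v : V) : fpair G A v v = 0 := by
  unfold fpair
  rw [if_neg]
  intro h
  exact G.irrefl h.1

private lemma row (A : Finset V) (v : V) :
    ∑ u, fpair G A v u
      = ((G.neighborFinset v).filter (fun u => u ∈ A ↔ v ∈ A)).card := by
  rw [Finset.card_filter]
  rw [← Finset.sum_subset (Finset.subset_univ (G.neighborFinset v))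
    (f := fun u => fpair G A v u) ?_]
  · apply Finset.sum_congr rfl
    intro u hu
    rw [G.mem_neighborFinset] at hu
    simp [fpair, hu]
  · intro u _ hu
    rw [G.mem_neighborFinset] at hu
    simp [fpair, hu]

private lemma decomp (A : Finset V) (v : V) :
    cost G A = 2 * (∑ u, fpair G A v u)
      + ∑ w ∈ univ.erase v, ∑ u ∈ univ.erase v, fpair G A w u := by
  unfold cost
  rw [← Finset.sum_erase_add _ _ (mem_univ v)]
  have h1 : ∀ w, ∑ u, fpair G A w u
      = ∑ u ∈ univ.erase v, fpair G A w u + fpair G A w v := by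
    intro w
    rw [Finset.sum_erase_add _ _ (mem_univ v)]
  have h2 : ∑ w ∈ univ.erase v, fpair G A w v = ∑ u, fpair G A v u := by
    rw [show (∑ w ∈ univ.erase v, fpair G A w v)
        = ∑ w ∈ univ.erase v, fpair G A v w from
      Finset.sum_congr rfl (fun w _ => fsymm G A w v)]
    have h3 := Finset.sum_erase_add univ (fpair G A v) (mem_univ v)
    rw [fself] at h3
    omega
  calc (∑ w ∈ univ.erase v, ∑ u, fpair G A w u) + ∑ u, fpair G A v u
      = (∑ w ∈ univ.erase v, (∑ u ∈ univ.erase v, fpair G A w u + fpair G A w v))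
        + ∑ u, fpair G A v u := by
        rw [Finset.sum_congr rfl (fun w _ => h1 w)]
    _ = (∑ w ∈ univ.erase v, ∑ u ∈ univ.erase v, fpair G A w u)
        + (∑ w ∈ univ.erase v, fpair G A w v) + ∑ u, fpair G A v u := by
        rw [Finset.sum_add_distrib]
    _ = _ := by rw [h2]; ring

private lemma deg_sum (v : V) :
    ∑ u, (if G.Adj v u then 1 else 0) = G.degree v := by
  rw [SimpleGraph.degree, SimpleGraph.neighborFinset_eq_filter, Finset.card_filter]

private lemma key_s3 (A A' : Finset V) (v : V)
    (h1 : ∀ u, u ≠ v → (u ∈ A' ↔ u ∈ A)) (h2 : v ∈ A' ↔ v ∉ A) :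
    cost G A' + 4 * ∑ u, fpair G A v u = cost G A + 2 * G.degree v := by
  have hf : ∀ w ∈ univ.erase v, ∀ u ∈ univ.erase v, fpair G A' w u = fpair G A w u := by
    intro w hw u hu
    rw [Finset.mem_erase] at hw hu
    unfold fpair
    exact if_congr (and_congr Iff.rfl (iff_congr (h1 u hu.1) (h1 w hw.1))) rfl rfl
  have hflip : ∀ u, fpair G A' v u + fpair G A v u = if G.Adj v u then 1 else 0 := by
    intro u
    by_cases huv : u = v
    · subst huv
      rw [fself, fself, if_neg (G.irrefl)]
    · unfold fpair
      by_cases ha : G.Adj v u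
      · rw [if_pos ha]
        have hc : (u ∈ A' ↔ v ∈ A') ↔ ¬ (u ∈ A ↔ v ∈ A) := by
          rw [h1 u huv, h2]; tauto
        by_cases hcA : u ∈ A ↔ v ∈ A
        · rw [if_neg (fun h => (hc.mp h.2) hcA), if_pos ⟨ha, hcA⟩]
        · rw [if_pos ⟨ha, hc.mpr hcA⟩, if_neg (fun h => hcA h.2)]
      · rw [if_neg ha, if_neg (fun h => ha h.1), if_neg (fun h => ha h.1)]
  have hS : (∑ u, fpair G A' v u) + (∑ u, fpair G A v u) = G.degree v := by
    rw [← Finset.sum_add_distrib, ← deg_sum G v]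
    exact Finset.sum_congr rfl (fun u _ => hflip u)
  have hC : (∑ w ∈ univ.erase v, ∑ u ∈ univ.erase v, fpair G A' w u)
      = ∑ w ∈ univ.erase v, ∑ u ∈ univ.erase v, fpair G A w u :=
    Finset.sum_congr rfl (fun w hw => Finset.sum_congr rfl (fun u hu => hf w hw u hu))
  rw [decomp G A v, decomp G A' v, hC]
  omega

private lemma samecount_le_one (hdeg : ∀ v, G.degree v ≤ 3) :
    ∃ A : Finset V, ∀ v,
      ((G.neighborFinset v).filter (fun u => u ∈ A ↔ v ∈ A)).card ≤ 1 := by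
  obtain ⟨A, -, hmin⟩ := Finset.exists_min_image (univ : Finset (Finset V)) (cost G)
    ⟨∅, mem_univ ∅⟩
  refine ⟨A, fun v => ?_⟩
  by_contra hcon
  push_neg at hcon
  set A' : Finset V := if v ∈ A then A.erase v else insert v A with hA'
  have h1 : ∀ u, u ≠ v → (u ∈ A' ↔ u ∈ A) := by
    intro u hu
    rw [hA']
    split <;> simp [hu]
  have h2 : v ∈ A' ↔ v ∉ A := by
    rw [hA']
    split <;> simp_all
  have hk := key_s3 G A A' v h1 h2
  rw [row] at hk
  have := hmin A' (mem_univ A')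
  have := hdeg v
  omega

end Aux

theorem stmt3 {V : Type*} [Fintype V] (G : SimpleGraph V) [DecidableRel G.Adj]
    (hdeg : ∀ v, G.degree v ≤ 3) :
    ∃ A : Set V, (∀ v ∈ A, {u ∈ A | G.Adj v u}.Subsingleton) ∧
      (∀ v ∈ Aᶜ, {u ∈ Aᶜ | G.Adj v u}.Subsingleton) := by
  classical
  obtain ⟨A, hA⟩ := samecount_le_one G hdeg
  refine ⟨(A : Set V), ?_, ?_⟩
  · intro v hv u1 hu1 u2 hu2
    by_contra hne
    have h2 : 1 < ((G.neighborFinset v).filter (fun u => u ∈ A ↔ v ∈ A)).card := by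
      rw [Finset.one_lt_card]
      refine ⟨u1, ?_, u2, ?_, hne⟩ <;>
        simp_all [Finset.mem_filter, G.mem_neighborFinset, Set.mem_setOf_eq]
    exact absurd (hA v) (by omega)
  · intro v hv u1 hu1 u2 hu2
    by_contra hne
    have hv' : v ∉ A := by simpa using hv
    have h2 : 1 < ((G.neighborFinset v).filter (fun u => u ∈ A ↔ v ∈ A)).card := by
      rw [Finset.one_lt_card]
      refine ⟨u1, ?_, u2, ?_, hne⟩ <;>
        simp_all [Finset.mem_filter, G.mem_neighborFinset, Set.mem_setOf_eq]
    exact absurd (hA v) (by omega)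
end

section
/- Let G be a K4^- -free, house-free, net-free graph and let B be a maximal clique of G with at least 3 vertices. Then at most two vertices of B have a neighbor outside B. -/
open SimpleGraph

variable {V : Type*}

/-- `G` contains an induced copy of `H`. -/
def HasInducedCopy {W : Type*} (H : SimpleGraph W) (G : SimpleGraph V) : Prop :=
  ∃ f : W ↪ V, ∀ a b, G.Adj (f a) (f b) ↔ H.Adj a b

/-- The diamond `K₄⁻`: the complete graph on four vertices minus the edge `01`. -/
def diamond : SimpleGraph (Fin 4) :=
  SimpleGraph.fromRel (fun a b => ¬((a = 0 ∧ b = 1) ∨ (a = 1 ∧ b = 0)))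

/-- The house: the complement of the path on five vertices. -/
def house : SimpleGraph (Fin 5) := (SimpleGraph.pathGraph 5)ᶜ

/-- The net: a triangle `012` with pendant vertices `3, 4, 5` attached to `0, 1, 2`. -/
def net : SimpleGraph (Fin 6) :=
  SimpleGraph.fromRel (fun a b =>
    (a = 0 ∧ b = 1) ∨ (a = 0 ∧ b = 2) ∨ (a = 1 ∧ b = 2) ∨
    (a = 0 ∧ b = 3) ∨ (a = 1 ∧ b = 4) ∨ (a = 2 ∧ b = 5))

/-!
If a vertex `w` outside the maximal clique `B` had two neighbours `u, v` in `B`, then `w, u, v`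
and a vertex `t ∈ B` not adjacent to `w` (which exists by maximality) would induce a diamond.
So the outside neighbours of distinct vertices of `B` are private. Three vertices `x, y, z` of
`B` with outside neighbours `a, b, c` then induce a house as soon as two of `a, b, c` are
adjacent, and a net otherwise.
-/

section InducedCopies

variable {W : Type*} {G : SimpleGraph V}

instance : DecidableRel diamond.Adj := fun a b =>
  decidable_of_iff _ (fromRel_adj _ a b).symm

instance : DecidableRel house.Adj := fun a b =>
  decidable_of_iff (a ≠ b ∧ ¬(a.val + 1 = b.val ∨ b.val + 1 = a.val)) (by
    rw [house, compl_adj, pathGraph_adj])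

instance : DecidableRel net.Adj := fun a b =>
  decidable_of_iff _ (fromRel_adj _ a b).symm

lemma hasInducedCopy_of_adj_iff {H : SimpleGraph W}
    (hH : ∀ i j, i ≠ j → ∃ k, ¬(H.Adj i k ↔ H.Adj j k)) (f : W → V)
    (hf : ∀ i j, G.Adj (f i) (f j) ↔ H.Adj i j) : HasInducedCopy H G := by
  refine ⟨⟨f, fun i j hij => ?_⟩, hf⟩
  by_contra hne
  obtain ⟨k, hk⟩ := hH i j hne
  exact hk (by rw [← hf, ← hf, hij])

lemma hasInducedCopy_diamond {w t u v : V} (hwt : w ≠ t) (hwt' : ¬G.Adj w t)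
    (hwu : G.Adj w u) (hwv : G.Adj w v) (htu : G.Adj t u) (htv : G.Adj t v) (huv : G.Adj u v) :
    HasInducedCopy diamond G := by
  have hadj : ∀ i j, G.Adj (![w, t, u, v] i) (![w, t, u, v] j) ↔ diamond.Adj i j := by
    intro i j
    fin_cases i <;> fin_cases j <;> simp [diamond, G.adj_comm, *]
  -- the diamond's vertices `0` and `1` are twins, so injectivity needs `w ≠ t`
  refine ⟨⟨![w, t, u, v], fun i j hij => ?_⟩, hadj⟩
  by_contra hne
  fin_cases i <;> fin_cases j <;> simp_all

lemma hasInducedCopy_house {x y z a b : V} (hxy : G.Adj x y) (hxz : G.Adj x z) (hyz : G.Adj y z)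
    (hxa : G.Adj x a) (hyb : G.Adj y b) (hab : G.Adj a b)
    (hxb : ¬G.Adj x b) (hya : ¬G.Adj y a) (hza : ¬G.Adj z a) (hzb : ¬G.Adj z b) :
    HasInducedCopy house G := by
  -- the non-edges form the path `x - b - z - a - y`, whose complement is the house
  refine hasInducedCopy_of_adj_iff (by decide) ![x, b, z, a, y] fun i j => ?_
  fin_cases i <;> fin_cases j <;> simp [house, pathGraph_adj, G.adj_comm, *]

lemma hasInducedCopy_net {x y z a b c : V} (hxy : G.Adj x y) (hxz : G.Adj x z) (hyz : G.Adj y z)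
    (hxa : G.Adj x a) (hyb : G.Adj y b) (hzc : G.Adj z c)
    (hxb : ¬G.Adj x b) (hxc : ¬G.Adj x c) (hya : ¬G.Adj y a)
    (hyc : ¬G.Adj y c) (hza : ¬G.Adj z a) (hzb : ¬G.Adj z b)
    (hab : ¬G.Adj a b) (hac : ¬G.Adj a c) (hbc : ¬G.Adj b c) :
    HasInducedCopy net G := by
  refine hasInducedCopy_of_adj_iff (by decide) ![x, y, z, a, b, c] fun i j => ?_
  fin_cases i <;> fin_cases j <;> simp [net, G.adj_comm, *]

end InducedCopies

section MaximalClique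

variable {G : SimpleGraph V} {B : Set V}

lemma exists_not_adj_of_notMem_of_maximal (hB : G.IsClique B)
    (hBmax : ∀ C : Set V, G.IsClique C → B ⊆ C → B = C) {w : V} (hw : w ∉ B) :
    ∃ t ∈ B, ¬G.Adj w t := by
  by_contra! h
  have hBw := hBmax _ (isClique_insert.2 ⟨hB, fun t ht _ => h t ht⟩) (Set.subset_insert w B)
  exact hw (hBw ▸ Set.mem_insert w B)

lemma eq_of_adj_of_adj_of_notMem (hd : ¬HasInducedCopy diamond G) (hB : G.IsClique B)
    (hBmax : ∀ C : Set V, G.IsClique C → B ⊆ C → B = C) ⦃u v w : V⦄ (hw : w ∉ B)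
    (hu : u ∈ B) (hv : v ∈ B) (huw : G.Adj u w) (hvw : G.Adj v w) : u = v := by
  by_contra huv
  obtain ⟨t, ht, hwt⟩ := exists_not_adj_of_notMem_of_maximal hB hBmax hw
  have htu : t ≠ u := fun h => hwt (h ▸ huw.symm)
  have htv : t ≠ v := fun h => hwt (h ▸ hvw.symm)
  exact hd (hasInducedCopy_diamond (ne_of_mem_of_not_mem ht hw).symm hwt huw.symm hvw.symm
    (hB ht hu htu) (hB ht hv htv) (hB hu hv huv))

lemma not_adj_of_adj_of_adj_of_notMem (hd : ¬HasInducedCopy diamond G)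
    (hh : ¬HasInducedCopy house G) (hB : G.IsClique B)
    (hBmax : ∀ C : Set V, G.IsClique C → B ⊆ C → B = C) ⦃x y z a b : V⦄
    (hx : x ∈ B) (hy : y ∈ B) (hz : z ∈ B) (hxy : x ≠ y) (hxz : x ≠ z) (hyz : y ≠ z)
    (ha : a ∉ B) (hb : b ∉ B) (hxa : G.Adj x a) (hyb : G.Adj y b) : ¬G.Adj a b := by
  intro hab
  have hunique := eq_of_adj_of_adj_of_notMem hd hB hBmax
  exact hh (hasInducedCopy_house (hB hx hy hxy) (hB hx hz hxz) (hB hy hz hyz) hxa hyb hab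
    (fun h => hxy (hunique hb hx hy h hyb)) (fun h => hxy (hunique ha hx hy hxa h))
    (fun h => hxz (hunique ha hx hz hxa h)) (fun h => hyz (hunique hb hy hz hyb h)))

end MaximalClique

theorem stmt6_general (G : SimpleGraph V)
    (hd : ¬HasInducedCopy diamond G) (hh : ¬HasInducedCopy house G)
    (hn : ¬HasInducedCopy net G)
    (B : Set V) (hB : G.IsClique B)
    (hBmax : ∀ C : Set V, G.IsClique C → B ⊆ C → B = C) :
    {u ∈ B | ∃ w ∉ B, G.Adj u w}.ncard ≤ 2 := by
  by_contra! h
  obtain ⟨x, ⟨hx, a, ha, hxa⟩, y, ⟨hy, b, hb, hyb⟩, z, ⟨hz, c, hc, hzc⟩, hxy, hxz, hyz⟩ :=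
    (Set.two_lt_ncard (Set.finite_of_ncard_pos (by omega))).mp h
  have hunique := eq_of_adj_of_adj_of_notMem hd hB hBmax
  have hnonadj := not_adj_of_adj_of_adj_of_notMem hd hh hB hBmax
  exact hn (hasInducedCopy_net (hB hx hy hxy) (hB hx hz hxz) (hB hy hz hyz) hxa hyb hzc
    (fun h => hxy (hunique hb hx hy h hyb)) (fun h => hxz (hunique hc hx hz h hzc))
    (fun h => hxy (hunique ha hx hy hxa h)) (fun h => hyz (hunique hc hy hz h hzc))
    (fun h => hxz (hunique ha hx hz hxa h)) (fun h => hyz (hunique hb hy hz hyb h))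
    (hnonadj hx hy hz hxy hxz hyz ha hb hxa hyb)
    (hnonadj hx hz hy hxz hxy hyz.symm ha hc hxa hzc)
    (hnonadj hy hz hx hyz hxy.symm hxz.symm hb hc hyb hzc))

theorem stmt6 (G : SimpleGraph V)
    (hd : ¬HasInducedCopy diamond G) (hh : ¬HasInducedCopy house G)
    (hn : ¬HasInducedCopy net G)
    (B : Set V) (hB : G.IsClique B)
    (hBmax : ∀ C : Set V, G.IsClique C → B ⊆ C → B = C)
    (hB3 : ∃ x ∈ B, ∃ y ∈ B, ∃ z ∈ B, x ≠ y ∧ x ≠ z ∧ y ≠ z) :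
    {u ∈ B | ∃ w ∉ B, G.Adj u w}.ncard ≤ 2 :=
  stmt6_general G hd hh hn B hB hBmax
end

section
/- Let G be a graph in which every edge is incident to a vertex of degree 4 and a vertex of degree 2. Then in any edge-partition of G into red and blue edges where the blue edges induce a star forest and each vertex has at most two red edges, exactly half of the edges of G are blue. -/
open SimpleGraph

variable {V : Type*}

/-- A graph is a star forest iff it has no path on four vertices as a subgraph and
no triangle: every connected component is a star. -/
def IsStarForest (H : SimpleGraph V) : Prop :=
  (∀ a b c d : V, H.Adj a b → H.Adj b c → H.Adj c d → a = c ∨ b = d ∨ a = d) ∧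
    H.CliqueFree 3

/-- `Bl` is the blue part of an edge-partition of `G`: `Bl` is a subgraph of `G`
whose edges form a star forest, and each vertex is incident to at most two
red (i.e. non-blue) edges of `G`. -/
def IsEdgePartition (G Bl : SimpleGraph V) : Prop :=
  Bl ≤ G ∧ IsStarForest Bl ∧ ∀ v, {u | G.Adj v u ∧ ¬Bl.Adj v u}.ncard ≤ 2

/-- One-sided handshake: if every edge of `H` has exactly one endpoint in `A`,
then the sum of degrees over `A` equals the number of edges. -/
lemma sum_deg_side [Fintype V] (H : SimpleGraph V) [DecidableRel H.Adj] (A : Finset V)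
    (h : ∀ a b, H.Adj a b → (a ∈ A ∧ b ∉ A) ∨ (a ∉ A ∧ b ∈ A)) :
    ∑ v ∈ A, H.degree v = H.edgeFinset.card := by
  classical
  have h1 : ∀ v : V, H.degree v = (H.edgeFinset.filter (fun e => v ∈ e)).card := by
    intro v
    rw [← SimpleGraph.card_incidenceFinset_eq_degree, SimpleGraph.incidenceFinset_eq_filter]
  calc ∑ v ∈ A, H.degree v
      = ∑ v ∈ A, ∑ e ∈ H.edgeFinset, (if v ∈ e then 1 else 0) := by
        simp only [h1, Finset.card_filter]
    _ = ∑ e ∈ H.edgeFinset, ∑ v ∈ A, (if v ∈ e then 1 else 0) := Finset.sum_comm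
    _ = ∑ e ∈ H.edgeFinset, (A.filter (fun v => v ∈ e)).card := by
        simp only [Finset.card_filter]
    _ = ∑ e ∈ H.edgeFinset, 1 := by
        refine Finset.sum_congr rfl ?_
        intro e he
        induction e with
        | h a b =>
          rw [SimpleGraph.mem_edgeFinset, SimpleGraph.mem_edgeSet] at he
          rw [Finset.card_eq_one]
          rcases h a b he with ⟨ha, hb⟩ | ⟨ha, hb⟩
          · refine ⟨a, ?_⟩
            ext v
            simp only [Finset.mem_filter, Sym2.mem_iff, Finset.mem_singleton]
            constructor
            · rintro ⟨hv, rfl | rfl⟩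
              · rfl
              · exact absurd hv hb
            · rintro rfl; exact ⟨ha, Or.inl rfl⟩
          · refine ⟨b, ?_⟩
            ext v
            simp only [Finset.mem_filter, Sym2.mem_iff, Finset.mem_singleton]
            constructor
            · rintro ⟨hv, rfl | rfl⟩
              · exact absurd hv ha
              · rfl
            · rintro rfl; exact ⟨hb, Or.inr rfl⟩
    _ = H.edgeFinset.card := by simp

theorem stmt12 [Fintype V] (G : SimpleGraph V) [DecidableRel G.Adj]
    (hG : ∀ u v, G.Adj u v →
      (G.degree u = 4 ∧ G.degree v = 2) ∨ (G.degree u = 2 ∧ G.degree v = 4))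
    (Bl : SimpleGraph V) (hBl : IsEdgePartition G Bl) :
    2 * Bl.edgeSet.ncard = G.edgeSet.ncard := by
  classical
  obtain ⟨hle, ⟨hP4, hK3⟩, hred⟩ := hBl
  have hsub : ∀ v, Bl.neighborFinset v ⊆ G.neighborFinset v := by
    intro v u hu
    rw [SimpleGraph.mem_neighborFinset] at *
    exact hle hu
  have hredcount : ∀ v, G.degree v - Bl.degree v ≤ 2 := by
    intro v
    have h := hred v
    have hset : {u | G.Adj v u ∧ ¬Bl.Adj v u}
        = ↑(G.neighborFinset v \ Bl.neighborFinset v) := by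
      ext u
      simp [SimpleGraph.mem_neighborFinset]
    rw [hset, Set.ncard_coe_finset, Finset.card_sdiff_of_subset (hsub v)] at h
    exact h
  have hblue4 : ∀ v, G.degree v = 4 → 2 ≤ Bl.degree v := by
    intro v hv
    have h := hredcount v
    rw [hv] at h
    omega
  have hdeg4 : ∀ u v, G.Adj u v → G.degree v = 2 → G.degree u = 4 := by
    intro u v h hv
    rcases hG u v h with ⟨h1, _⟩ | ⟨_, h2⟩
    · exact h1
    · omega
  have hblue2 : ∀ v, G.degree v = 2 → Bl.degree v ≤ 1 := by
    intro v hv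
    by_contra hc
    push_neg at hc
    obtain ⟨u, hu, w, hw, huw⟩ := Finset.one_lt_card.mp hc
    rw [SimpleGraph.mem_neighborFinset] at hu hw
    have hu4 : G.degree u = 4 := hdeg4 u v (hle hu).symm hv
    have h2u : 2 ≤ Bl.degree u := hblue4 u hu4
    obtain ⟨u', hu', hu'v⟩ :=
      Finset.exists_mem_ne (by rw [SimpleGraph.card_neighborFinset_eq_degree]; omega : 1 < (Bl.neighborFinset u).card) v
    rw [SimpleGraph.mem_neighborFinset] at hu'
    rcases hP4 u' u v w hu'.symm hu.symm hw with h1 | h2 | h3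
    · exact hu'v h1
    · exact huw h2
    · subst h3
      exact hK3 _ (SimpleGraph.is3Clique_triple_iff.mpr ⟨hu.symm, hu', hw⟩)
  set A := Finset.univ.filter (fun v => G.degree v = 4) with hA
  set B := Finset.univ.filter (fun v => G.degree v = 2) with hB
  have hmemA : ∀ v, v ∈ A ↔ G.degree v = 4 := by
    intro v; simp [hA]
  have hmemB : ∀ v, v ∈ B ↔ G.degree v = 2 := by
    intro v; simp [hB]
  have hsideA : ∀ a b, G.Adj a b → (a ∈ A ∧ b ∉ A) ∨ (a ∉ A ∧ b ∈ A) := by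
    intro a b h
    rcases hG a b h with ⟨h1, h2⟩ | ⟨h1, h2⟩
    · left; rw [hmemA, hmemA]; omega
    · right; rw [hmemA, hmemA]; omega
  have hsideB : ∀ a b, G.Adj a b → (a ∈ B ∧ b ∉ B) ∨ (a ∉ B ∧ b ∈ B) := by
    intro a b h
    rcases hG a b h with ⟨h1, h2⟩ | ⟨h1, h2⟩
    · right; rw [hmemB, hmemB]; omega
    · left; rw [hmemB, hmemB]; omega
  have e1 : ∑ v ∈ A, G.degree v = G.edgeFinset.card := sum_deg_side G A hsideA
  have e2 : ∑ v ∈ B, G.degree v = G.edgeFinset.card := sum_deg_side G B hsideB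
  have e3 : ∑ v ∈ A, Bl.degree v = Bl.edgeFinset.card :=
    sum_deg_side Bl A (fun a b h => hsideA a b (hle h))
  have e4 : ∑ v ∈ B, Bl.degree v = Bl.edgeFinset.card :=
    sum_deg_side Bl B (fun a b h => hsideB a b (hle h))
  have c1 : ∑ v ∈ A, G.degree v = A.card * 4 := by
    rw [Finset.sum_congr rfl (fun v hv => (hmemA v).mp hv), Finset.sum_const, smul_eq_mul]
  have c2 : ∑ v ∈ B, G.degree v = B.card * 2 := by
    rw [Finset.sum_congr rfl (fun v hv => (hmemB v).mp hv), Finset.sum_const, smul_eq_mul]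
  have i3 : A.card * 2 ≤ ∑ v ∈ A, Bl.degree v := by
    have := Finset.card_nsmul_le_sum A (fun v => Bl.degree v) 2
      (fun v hv => hblue4 v ((hmemA v).mp hv))
    simpa using this
  have i4 : ∑ v ∈ B, Bl.degree v ≤ B.card * 1 := by
    have := Finset.sum_le_card_nsmul B (fun v => Bl.degree v) 1
      (fun v hv => hblue2 v ((hmemB v).mp hv))
    simpa using this
  rw [← SimpleGraph.coe_edgeFinset, ← SimpleGraph.coe_edgeFinset,
    Set.ncard_coe_finset, Set.ncard_coe_finset]
  omega
end
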